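/- Let θ ∈ (0, π/2), n ≥ 2, and let C = {x ∈ ℝⁿ : x₁ ≥ |x| cos θ}. Let h(x) = |x|^α φ(x/|x|) be the positive harmonic function in ℝⁿ \ C vanishing on ∂C with h(-e₁) = 1, where α ∈ (0,1) is the associated homogeneity exponent. Then for every open bounded set Ω with Ω̄ ∩ C = ∅ and dist(Ω, 0) > 0, one has inf_Ω |∇h| > 0, and for C₀ > 0 sufficiently large (depending on r, n, Ω) the function φ(x) = C₀ h(x) - (r/(2n))|x|² satisfies -Δφ = r and |∇φ| ≥ 1 pointwise in Ω, i.e. min(-Δφ - r, |∇φ| - 1) ≥ 0 in Ω. -/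

import Mathlib

open Metric

noncomputable def lap {n : ℕ} (u : EuclideanSpace ℝ (Fin n) → ℝ)
    (x : EuclideanSpace ℝ (Fin n)) : ℝ :=
  ∑ i, fderiv ℝ (fun y => fderiv ℝ u y (EuclideanSpace.single i 1)) x (EuclideanSpace.single i 1)

/-!
Differentiating `h (t • x) = t ^ α * h x` at `t = 1` gives Euler's identity `⟪∇h x, x⟫ = α h x`,
so by Cauchy–Schwarz `‖∇h x‖ ≥ α h x / ‖x‖`. On `Ω` the numerator is bounded below by the positive
minimum of `h` over the compact set `closure Ω ⊆ Cᶜ`, and `‖x‖` is bounded above, whence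
`inf_Ω ‖∇h‖ > 0`. For `φ = C₀ h - c ‖·‖²` with `c = r / (2n)`, linearity of the Laplacian on
`C²` functions and `Δ‖·‖² = 2n` give `-Δφ = r`, while `∇φ = C₀ ∇h - 2c x` has norm at least
`C₀ inf_Ω ‖∇h‖ - 2|c| sup_Ω ‖x‖`, which is `≥ 1` for `C₀` large.
-/

open InnerProductSpace Laplacian RealInnerProductSpace Gradient

section Laplacian

variable {n : ℕ} {u v : EuclideanSpace ℝ (Fin n) → ℝ} {x : EuclideanSpace ℝ (Fin n)}

lemma lap_eq_laplacian (hu : ContDiffAt ℝ 2 u x) : lap u x = Δ u x := by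
  have hdu : DifferentiableAt ℝ (fderiv ℝ u) x :=
    (hu.fderiv_right (m := 1) le_rfl).differentiableAt one_ne_zero
  rw [laplacian_eq_iteratedFDeriv_orthonormalBasis u (EuclideanSpace.basisFun (Fin n) ℝ)]
  refine Finset.sum_congr rfl fun i _ => ?_
  rw [iteratedFDeriv_two_apply, fderiv_clm_apply hdu (differentiableAt_const _)]
  simp

lemma lap_const_mul_sub_const_mul (a b : ℝ) (hu : ContDiffAt ℝ 2 u x) (hv : ContDiffAt ℝ 2 v x) :
    lap (fun y => a * u y - b * v y) x = a * lap u x - b * lap v x := by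
  have hau : ContDiffAt ℝ 2 (a • u) x := hu.const_smul a
  have hbv : ContDiffAt ℝ 2 (b • v) x := hv.const_smul b
  have hφ : (fun y => a * u y - b * v y) = a • u - b • v := rfl
  have hφd : ContDiffAt ℝ 2 (a • u - b • v) x := hau.sub hbv
  rw [hφ, lap_eq_laplacian hu, lap_eq_laplacian hv, lap_eq_laplacian hφd,
    hau.laplacian_sub hbv, laplacian_smul a hu, laplacian_smul b hv]
  rfl

lemma lap_norm_sq (x : EuclideanSpace ℝ (Fin n)) :
    lap (fun y : EuclideanSpace ℝ (Fin n) => ‖y‖ ^ 2) x = 2 * n := by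
  have hpartial (e : EuclideanSpace ℝ (Fin n)) :
      (fun y => fderiv ℝ (fun y : EuclideanSpace ℝ (Fin n) => ‖y‖ ^ 2) y e)
        = ⇑((2 : ℝ) • innerSL ℝ e) := by
    funext y
    simp [real_inner_comm]
  simp only [lap, hpartial, ContinuousLinearMap.fderiv]
  simp [mul_comm]

end Laplacian

lemma gradient_const_mul_sub_const_mul_norm_sq {E : Type*} [NormedAddCommGroup E]
    [InnerProductSpace ℝ E] [CompleteSpace E] {u : E → ℝ} {x : E} (a b : ℝ)
    (hu : DifferentiableAt ℝ u x) :
    ∇ (fun y => a * u y - b * ‖y‖ ^ 2) x = a • ∇ u x - (2 * b) • x := by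
  refine HasGradientAt.gradient ?_
  rw [hasGradientAt_iff_hasFDerivAt]
  refine ((hu.hasFDerivAt.const_mul a).sub
    ((hasStrictFDerivAt_norm_sq x).hasFDerivAt.const_mul b)).congr_fderiv ?_
  ext v
  simp only [sub_apply, smul_apply, smul_eq_mul, coe_innerSL_apply, nsmul_eq_mul, Nat.cast_ofNat,
    map_sub, map_smul, toDual_gradient, toDual_apply_apply, sub_right_inj]
  ring

lemma fderiv_apply_self_of_homogeneous {E : Type*} [NormedAddCommGroup E] [NormedSpace ℝ E]
    {h : E → ℝ} {α : ℝ} (hhom : ∀ (x : E) (t : ℝ), 0 < t → h (t • x) = t ^ α * h x) {x : E}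
    (hx : DifferentiableAt ℝ h x) :
    fderiv ℝ h x x = α * h x := by
  have hray : HasDerivAt (fun t : ℝ => h (t • x)) (fderiv ℝ h x x) 1 := by
    have hline : HasDerivAt (fun t : ℝ => t • x) x 1 := by
      simpa using (hasDerivAt_id (1 : ℝ)).smul_const x
    exact hx.hasFDerivAt.comp_hasDerivAt_of_eq 1 hline (one_smul ℝ x).symm
  have hpow : HasDerivAt (fun t : ℝ => t ^ α * h x) (α * h x) 1 := by
    simpa using (Real.hasDerivAt_rpow_const (x := 1) (p := α) (Or.inl one_ne_zero)).mul_const (h x)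
  refine hray.unique (hpow.congr_of_eventuallyEq ?_)
  filter_upwards [eventually_gt_nhds one_pos] with t ht using hhom x t ht

section Homogeneous

variable {E : Type*} [NormedAddCommGroup E] [InnerProductSpace ℝ E] [CompleteSpace E]
  {h : E → ℝ} {α : ℝ}

lemma mul_le_norm_gradient_mul_norm_of_homogeneous
    (hhom : ∀ (x : E) (t : ℝ), 0 < t → h (t • x) = t ^ α * h x) {x : E}
    (hx : DifferentiableAt ℝ h x) :
    α * h x ≤ ‖∇ h x‖ * ‖x‖ := by
  rw [← fderiv_apply_self_of_homogeneous hhom hx, ← inner_gradient_left]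
  exact real_inner_le_norm _ _

lemma exists_pos_le_norm_gradient_of_homogeneous [ProperSpace E] (hα : 0 < α)
    (hhom : ∀ (x : E) (t : ℝ), 0 < t → h (t • x) = t ^ α * h x) {Ω : Set E}
    (hΩ : Bornology.IsBounded Ω) (hcont : ContinuousOn h (closure Ω))
    (hpos : ∀ x ∈ closure Ω, 0 < h x) (hdiff : ∀ x ∈ Ω, DifferentiableAt ℝ h x) :
    ∃ m > 0, ∀ x ∈ Ω, m ≤ ‖∇ h x‖ := by
  obtain ⟨δ, hδ, hδh⟩ := hΩ.isCompact_closure.exists_forall_le' hcont hpos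
  obtain ⟨R, hR, hRx⟩ := hΩ.exists_pos_norm_le
  refine ⟨α * δ / R, by positivity, fun x hx => ?_⟩
  rw [div_le_iff₀ hR]
  calc α * δ ≤ α * h x := by gcongr; exact hδh x (subset_closure hx)
    _ ≤ ‖∇ h x‖ * ‖x‖ := mul_le_norm_gradient_mul_norm_of_homogeneous hhom (hdiff x hx)
    _ ≤ ‖∇ h x‖ * R := by gcongr; exact hRx x hx

end Homogeneous

theorem stmt18 (n : ℕ) (hn : 2 ≤ n) (θ : ℝ)
    (r : ℝ)
    (C : Set (EuclideanSpace ℝ (Fin n)))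
    (hC : C = {x : EuclideanSpace ℝ (Fin n) | ‖x‖ * Real.cos θ ≤ x ⟨0, by omega⟩})
    (α : ℝ) (hα : α ∈ Set.Ioo (0 : ℝ) 1)
    (h : EuclideanSpace ℝ (Fin n) → ℝ)
    (hsmooth : ContDiffOn ℝ 2 h Cᶜ)
    (hhom : ∀ (x : EuclideanSpace ℝ (Fin n)) (t : ℝ), 0 < t → h (t • x) = t ^ α * h x)
    (hharm : ∀ x ∈ Cᶜ, lap h x = 0)
    (hpos : ∀ x ∈ Cᶜ, 0 < h x)
    (Ω : Set (EuclideanSpace ℝ (Fin n))) (hΩbdd : Bornology.IsBounded Ω)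
    (hΩC : closure Ω ⊆ Cᶜ) :
    (∃ m > 0, ∀ x ∈ Ω, m ≤ ‖gradient h x‖) ∧
    ∃ C₀ > 0, ∀ x ∈ Ω,
      -lap (fun y => C₀ * h y - (r / (2 * n)) * ‖y‖ ^ 2) x = r ∧
      1 ≤ ‖gradient (fun y => C₀ * h y - (r / (2 * n)) * ‖y‖ ^ 2) x‖ := by
  have hCc : IsOpen Cᶜ := by
    rw [hC]
    exact (isClosed_le (by fun_prop) (by fun_prop)).isOpen_compl
  have hΩCc : Ω ⊆ Cᶜ := subset_closure.trans hΩC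
  have hh : ∀ x ∈ Cᶜ, ContDiffAt ℝ 2 h x := fun x hx => hsmooth.contDiffAt (hCc.mem_nhds hx)
  obtain ⟨m, hm, hmx⟩ := exists_pos_le_norm_gradient_of_homogeneous hα.1 hhom hΩbdd
    (hsmooth.continuousOn.mono hΩC) (fun x hx => hpos x (hΩC hx))
    (fun x hx => (hh x (hΩCc hx)).differentiableAt two_ne_zero)
  obtain ⟨R, hR, hRx⟩ := hΩbdd.exists_pos_norm_le
  set c := r / (2 * n)
  set C₀ := (1 + 2 * |c| * R) / m
  have hn0 : (n : ℝ) ≠ 0 := by positivity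
  refine ⟨⟨m, hm, hmx⟩, C₀, by positivity, fun x hx => ⟨?_, ?_⟩⟩
  · rw [lap_const_mul_sub_const_mul _ _ (hh x (hΩCc hx)) (contDiff_norm_sq ℝ).contDiffAt,
      hharm x (hΩCc hx), lap_norm_sq]
    simp only [c]
    field_simp
    ring
  · rw [gradient_const_mul_sub_const_mul_norm_sq _ _
      ((hh x (hΩCc hx)).differentiableAt two_ne_zero)]
    calc 1 = C₀ * m - 2 * |c| * R := by simp only [C₀]; field_simp; ring
      _ ≤ C₀ * ‖∇ h x‖ - 2 * |c| * ‖x‖ := by gcongr; exacts [hmx x hx, hRx x hx]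
      _ = ‖C₀ • ∇ h x‖ - ‖(2 * c) • x‖ := by
        rw [norm_smul, norm_smul, Real.norm_of_nonneg (by positivity), Real.norm_eq_abs, abs_mul,
          abs_two]
      _ ≤ ‖C₀ • ∇ h x - (2 * c) • x‖ := norm_sub_norm_le _ _
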